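/- arXiv:2504.11398 — 3 statements merged into one kernel-verified Lean document; each statement's English description precedes it below -/
import Mathlib

section
/- Let V be a finite set, r : V → ℝ≥0, and t : I → ℝ≥0 for a finite index set I, all bounded by M. Suppose that for every τ ∈ [0, M], max(0, |{v ∈ V : r_v ≥ τ}| − 1) ≤ |{i ∈ I : t_i ≥ τ}|. Then Σ_{v∈V} r_v − max_{v∈V} r_v ≤ Σ_{i∈I} t_i. -/
open MeasureTheory Set

private lemma lcake_indic_integrable (M c : ℝ) :
    IntegrableOn ((Iic c).indicator (fun _ => (1:ℝ))) (Ioc 0 M) :=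
  (integrableOn_const measure_Ioc_lt_top.ne).indicator measurableSet_Iic

private lemma lcake_indic_int (M c : ℝ) (h0 : 0 ≤ c) (hM : c ≤ M) :
    ∫ τ in Ioc (0:ℝ) M, (Iic c).indicator (fun _ => (1:ℝ)) τ = c := by
  rw [MeasureTheory.setIntegral_indicator measurableSet_Iic]
  have h : Ioc (0:ℝ) M ∩ Iic c = Ioc 0 c := by
    ext x
    simp only [mem_inter_iff, mem_Ioc, mem_Iic]
    constructor
    · rintro ⟨⟨h1, _⟩, h3⟩; exact ⟨h1, h3⟩
    · rintro ⟨h1, h2⟩; exact ⟨⟨h1, h2.trans hM⟩, h2⟩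
  rw [h, setIntegral_const, smul_eq_mul, mul_one, Real.volume_real_Ioc]
  simp [h0]

private lemma lcake_sum_eq_integral {α : Type*} (s : Finset α) (M : ℝ) (f : α → ℝ)
    (h0 : ∀ v, 0 ≤ f v) (hM : ∀ v, f v ≤ M) :
    ∑ v ∈ s, f v
      = ∫ τ in Ioc (0:ℝ) M, ∑ v ∈ s, (Iic (f v)).indicator (fun _ => (1:ℝ)) τ := by
  rw [integral_finset_sum _ (fun v _ => lcake_indic_integrable M (f v))]
  exact Finset.sum_congr rfl fun v _ => (lcake_indic_int M (f v) (h0 v) (hM v)).symm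

private lemma lcake_sum_indic_eq_card {α : Type*} (s : Finset α) (f : α → ℝ) (τ : ℝ) :
    ∑ v ∈ s, (Iic (f v)).indicator (fun _ => (1:ℝ)) τ
      = ((s.filter fun v => τ ≤ f v).card : ℝ) := by
  rw [← Finset.sum_boole]
  exact Finset.sum_congr rfl fun v _ => by simp [indicator_apply]

/-- Let `V` be a nonempty finite set, `r : V → ℝ≥0` and
`t : I → ℝ≥0` (with `I` finite) bounded by `M`.  If for every `τ ∈ [0, M]`,
`max(0, |{v : r v ≥ τ}| − 1) ≤ |{i : t i ≥ τ}|` (natural subtraction encodes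
the `max` with 0), then `Σ_v r v − max_v r v ≤ Σ_i t i`. -/
theorem layercake_sum_sub_max_le {V I : Type*} [Fintype V] [Fintype I] [Nonempty V]
    (M : ℝ) (r : V → ℝ) (t : I → ℝ)
    (hr0 : ∀ v, 0 ≤ r v) (hrM : ∀ v, r v ≤ M)
    (ht0 : ∀ i, 0 ≤ t i) (htM : ∀ i, t i ≤ M)
    (hcomp : ∀ τ : ℝ, 0 ≤ τ → τ ≤ M →
      (Finset.univ.filter (fun v : V => τ ≤ r v)).card - 1 ≤
        (Finset.univ.filter (fun i : I => τ ≤ t i)).card) :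
    ∑ v, r v - Finset.univ.sup' Finset.univ_nonempty r ≤ ∑ i, t i := by
  classical
  obtain ⟨v₀, -, hv₀⟩ := Finset.exists_mem_eq_sup' Finset.univ_nonempty r
  rw [hv₀, ← Finset.sum_erase_add Finset.univ r (Finset.mem_univ v₀),
    add_sub_cancel_right]
  rw [lcake_sum_eq_integral (Finset.univ.erase v₀) M r hr0 hrM,
    lcake_sum_eq_integral Finset.univ M t ht0 htM]
  apply setIntegral_mono_on
    (integrable_finset_sum _ fun v _ => lcake_indic_integrable M (r v))
    (integrable_finset_sum _ fun i _ => lcake_indic_integrable M (t i))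
    measurableSet_Ioc
  intro τ hτ
  rw [lcake_sum_indic_eq_card, lcake_sum_indic_eq_card]
  have hnat : ((Finset.univ.erase v₀).filter fun v => τ ≤ r v).card
      ≤ (Finset.univ.filter (fun i : I => τ ≤ t i)).card := by
    refine le_trans ?_ (hcomp τ hτ.1.le hτ.2)
    rw [Finset.filter_erase]
    by_cases hmem : v₀ ∈ Finset.univ.filter (fun v : V => τ ≤ r v)
    · rw [Finset.card_erase_of_mem hmem]
    · have : (Finset.univ.filter fun v : V => τ ≤ r v) = ∅ := by
        by_contra hne
        obtain ⟨v, hv⟩ := Finset.nonempty_of_ne_empty hne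
        have hvr : τ ≤ r v := (Finset.mem_filter.1 hv).2
        exact hmem (Finset.mem_filter.2 ⟨Finset.mem_univ _,
          hvr.trans ((Finset.le_sup' r (Finset.mem_univ v)).trans_eq hv₀)⟩)
      simp [this]
  exact_mod_cast hnat
end

section
/- Let T be a rooted binary tree in which every internal vertex has exactly two children, with nonnegative edge costs b_v on the edge from each non-root vertex v to its parent. For each vertex v let φ_v be the minimum, over all leaves ℓ in the subtree rooted at v, of the total cost of the path from v to ℓ, and let f_v be the maximum such path cost. Then for every vertex v, Σ_{u in the subtree rooted at v} φ_u ≤ c(T_v) − f_v, where c(T_v) is the total cost of the edges in the subtree rooted at v. In particular, Σ_{u ∈ T, u ≠ root} φ_u ≤ c(T). -/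
/-- A rooted binary tree in which every internal vertex has exactly two
children, with a nonnegative cost on the edge from each child to its parent:
`node bl l br r` has left child subtree `l` attached by an edge of cost `bl`
and right child subtree `r` attached by an edge of cost `br`. -/
inductive CostTree : Type
  | leaf : CostTree
  | node (bl : ℝ) (l : CostTree) (br : ℝ) (r : CostTree) : CostTree

namespace CostTree

/-- Total cost of the edges of the tree. -/
def cost : CostTree → ℝ
  | leaf => 0
  | node bl l br r => bl + br + l.cost + r.cost

/-- `phi T` is the distance from the root of `T` to the closest leaf of `T`. -/
def phi : CostTree → ℝ
  | leaf => 0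
  | node bl l br r => min (bl + l.phi) (br + r.phi)

/-- `far T` is the distance from the root of `T` to the farthest leaf of `T`. -/
def far : CostTree → ℝ
  | leaf => 0
  | node bl l br r => max (bl + l.far) (br + r.far)

/-- `sumPhi T` is the sum of `phi` over all vertices (subtrees) of `T`. -/
def sumPhi : CostTree → ℝ
  | leaf => 0
  | node bl l br r => min (bl + l.phi) (br + r.phi) + l.sumPhi + r.sumPhi

/-- All edge costs of the tree are nonnegative. -/
def nonnegCosts : CostTree → Prop
  | leaf => True
  | node bl l br r => 0 ≤ bl ∧ 0 ≤ br ∧ l.nonnegCosts ∧ r.nonnegCosts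

end CostTree

theorem costTree_phi_le_far (T : CostTree) (hT : T.nonnegCosts) : T.phi ≤ T.far := by
  induction T with
  | leaf => simp [CostTree.phi, CostTree.far]
  | node bl l br r ihl ihr =>
    obtain ⟨hbl, hbr, hl, hr⟩ := hT
    have h1 := ihl hl
    have h2 := ihr hr
    simp only [CostTree.phi, CostTree.far]
    exact le_trans (min_le_left _ _) (le_trans (by linarith) (le_max_left _ _))

theorem costTree_far_nonneg (T : CostTree) (hT : T.nonnegCosts) : 0 ≤ T.far := by
  induction T with
  | leaf => simp [CostTree.far]
  | node bl l br r ihl ihr =>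
    obtain ⟨hbl, hbr, hl, hr⟩ := hT
    have := ihl hl
    simp only [CostTree.far]
    exact le_trans (by linarith) (le_max_left _ _)

/-- For every rooted binary tree `T` with nonnegative edge
costs, the sum over all vertices `u` of `T` of the distance `φ_u` from `u` to
the closest leaf in the subtree rooted at `u` satisfies
`Σ_{u ∈ T} φ_u ≤ c(T) − f(T)`, where `f(T)` is the distance from the root to
the farthest leaf.  (Applied at each vertex `v`, this gives the bound for the
subtree `T_v`.)  In particular, `Σ_{u ≠ root} φ_u ≤ c(T)`. -/
theorem costTree_sumPhi_le (T : CostTree) (hT : T.nonnegCosts) :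
    T.sumPhi ≤ T.cost - T.far ∧ T.sumPhi - T.phi ≤ T.cost := by
  induction T with
  | leaf => simp [CostTree.sumPhi, CostTree.cost, CostTree.far, CostTree.phi]
  | node bl l br r ihl ihr =>
    obtain ⟨hbl, hbr, hl, hr⟩ := hT
    obtain ⟨ihl1, _⟩ := ihl hl
    obtain ⟨ihr1, _⟩ := ihr hr
    have hpl := costTree_phi_le_far l hl
    have hpr := costTree_phi_le_far r hr
    have hfl := costTree_far_nonneg l hl
    have hfr := costTree_far_nonneg r hr
    simp only [CostTree.sumPhi, CostTree.cost, CostTree.far, CostTree.phi]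
    have hmin : min (bl + l.phi) (br + r.phi) ≤ min (bl + l.far) (br + r.far) :=
      min_le_min (by linarith) (by linarith)
    have hkey : min (bl + l.far) (br + r.far) + max (bl + l.far) (br + r.far)
        = (bl + l.far) + (br + r.far) := min_add_max _ _
    constructor
    · have : min (bl + l.phi) (br + r.phi)
          ≤ bl + br + l.far + r.far - max (bl + l.far) (br + r.far) := by linarith
      linarith
    · have h1 : min (bl + l.phi) (br + r.phi) + l.sumPhi + r.sumPhi
          - min (bl + l.phi) (br + r.phi) = l.sumPhi + r.sumPhi := by ring
      rw [h1]
      linarith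
end

section
/- Let T be a rooted binary tree where every internal vertex has exactly two children, and for each internal vertex v fix one leaf u(v) from its left subtree and one leaf w(v) from its right subtree. Form the graph G on the leaf set of T with edge set {(u(v), w(v)) : v internal vertex of T}. Then G is connected. -/
/-- A rooted binary tree with leaves labelled by elements of `α`, in which
every internal vertex has exactly two children. -/
inductive LTree (α : Type*) : Type _
  | leaf (a : α) : LTree α
  | node (l r : LTree α) : LTree α

namespace LTree

variable {α : Type*}

/-- The set of leaf labels of the tree. -/
def leaves : LTree α → Set α
  | .leaf a => {a}
  | .node l r => l.leaves ∪ r.leaves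

/-- `ChosenEdges T E` holds when `E` is obtained by fixing, for each internal
vertex `v` of `T`, one leaf `u(v)` of its left subtree and one leaf `w(v)` of
its right subtree, and taking the edges `(u(v), w(v))`. -/
inductive ChosenEdges : LTree α → Set (α × α) → Prop
  | leaf (a : α) : ChosenEdges (.leaf a) ∅
  | node {l r : LTree α} {El Er : Set (α × α)} (u w : α)
      (hu : u ∈ l.leaves) (hw : w ∈ r.leaves)
      (hl : ChosenEdges l El) (hr : ChosenEdges r Er) :
      ChosenEdges (.node l r) (insert (u, w) (El ∪ Er))

end LTree

/-- Let `T` be a rooted binary tree in which every internal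
vertex has exactly two children, and fix for each internal vertex one leaf of
its left subtree and one leaf of its right subtree, forming an edge between
them.  Then the resulting graph on the leaf set of `T` is connected: any two
leaves are joined by a path of chosen edges. -/
theorem chosenEdges_connected {α : Type*} (T : LTree α) (E : Set (α × α))
    (hE : LTree.ChosenEdges T E) :
    ∀ x ∈ T.leaves, ∀ y ∈ T.leaves,
      Relation.ReflTransGen (fun a b => (a, b) ∈ E ∨ (b, a) ∈ E) x y := by
  induction hE with
  | leaf a =>
    intro x hx y hy
    simp only [LTree.leaves] at hx hy
    subst hx; subst hy; exact .refl
  | @node l r El Er u w hu hw hl hr ihl ihr =>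
    have mono : ∀ (E E' : Set (α × α)), E ⊆ E' → ∀ a b,
        Relation.ReflTransGen (fun a b => (a, b) ∈ E ∨ (b, a) ∈ E) a b →
        Relation.ReflTransGen (fun a b => (a, b) ∈ E' ∨ (b, a) ∈ E') a b := by
      intro E E' hss a b h
      exact Relation.ReflTransGen.mono (fun x y (hxy : (x, y) ∈ E ∨ (y, x) ∈ E) => hxy.imp (@hss _) (@hss _)) _ _ h
    set E' := insert (u, w) (El ∪ Er) with hE'
    have hEl : El ⊆ E' := fun p hp => Set.mem_insert_of_mem _ (Or.inl hp)
    have hEr : Er ⊆ E' := fun p hp => Set.mem_insert_of_mem _ (Or.inr hp)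
    have huw : Relation.ReflTransGen (fun a b => (a, b) ∈ E' ∨ (b, a) ∈ E') u w :=
      Relation.ReflTransGen.single (Or.inl (Set.mem_insert _ _))
    have hL : ∀ x ∈ l.leaves, ∀ y ∈ l.leaves,
        Relation.ReflTransGen (fun a b => (a, b) ∈ E' ∨ (b, a) ∈ E') x y :=
      fun x hx y hy => mono El E' hEl x y (ihl x hx y hy)
    have hR : ∀ x ∈ r.leaves, ∀ y ∈ r.leaves,
        Relation.ReflTransGen (fun a b => (a, b) ∈ E' ∨ (b, a) ∈ E') x y :=
      fun x hx y hy => mono Er E' hEr x y (ihr x hx y hy)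
    intro x hx y hy
    rcases hx with hx | hx <;> rcases hy with hy | hy
    · exact hL x hx y hy
    · exact ((hL x hx u hu).trans huw).trans (hR w hw y hy)
    · exact ((hR x hx w hw).trans (Relation.ReflTransGen.single (Or.inr (Set.mem_insert _ _)))).trans (hL u hu y hy)
    · exact hR x hx y hy
end
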